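/- If (x; x_1,...,x_n) ∈ C, then Cr(x; x_1,...,x_n) ∈ C. -/

import Mathlib

/-- The product `(x; x_i)·(y; y_i) = x*y - ∑ i, x_i * y_i` on `ℝ^{1+(n+3)}`. -/
def dotp {n : ℕ} (x y : ℝ × (Fin (n + 3) → ℝ)) : ℝ :=
  x.1 * y.1 - ∑ i, x.2 i * y.2 i

/-- The vector `-K = (3; 1, 1, …, 1)`. -/
def negK {n : ℕ} : ℝ × (Fin (n + 3) → ℝ) := (3, fun _ => 1)

/-- The Cremona transform. -/
def Cr {n : ℕ} (d : ℝ × (Fin (n + 3) → ℝ)) : ℝ × (Fin (n + 3) → ℝ) :=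
  (2 * d.1 - d.2 0 - d.2 1 - d.2 2,
    fun i =>
      if i = 0 then d.1 - d.2 1 - d.2 2
      else if i = 1 then d.1 - d.2 0 - d.2 2
      else if i = 2 then d.1 - d.2 0 - d.2 1
      else d.2 i)

/-- A vector is positive if all its entries are nonnegative. -/
def PositiveVec {n : ℕ} (d : ℝ × (Fin (n + 3) → ℝ)) : Prop :=
  0 ≤ d.1 ∧ ∀ i, 0 ≤ d.2 i

/-- A vector is ordered if `d_i ≥ d_{i+1}` whenever both are nonzero, and nonzero
entries precede zero entries. -/
def OrderedVec {n : ℕ} (d : ℝ × (Fin (n + 3) → ℝ)) : Prop :=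
  (∀ (i : ℕ) (h1 : i < n + 3) (h2 : i + 1 < n + 3),
      d.2 ⟨i, h1⟩ ≠ 0 → d.2 ⟨i + 1, h2⟩ ≠ 0 → d.2 ⟨i + 1, h2⟩ ≤ d.2 ⟨i, h1⟩) ∧
  (∀ i j : Fin (n + 3), d.2 i ≠ 0 → d.2 j = 0 → i < j)

/-- A vector is reduced if it is positive, ordered, and `d ≥ d_1 + d_2 + d_3`. -/
def ReducedVec {n : ℕ} (d : ℝ × (Fin (n + 3) → ℝ)) : Prop :=
  PositiveVec d ∧ OrderedVec d ∧ d.2 0 + d.2 1 + d.2 2 ≤ d.1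

/-- A vector has integer entries. -/
def IntVec {n : ℕ} (d : ℝ × (Fin (n + 3) → ℝ)) : Prop :=
  (∃ z : ℤ, d.1 = z) ∧ ∀ i, ∃ z : ℤ, d.2 i = z

/-- The set `E` of integer vectors with `(d;d_i)·(d;d_i) ≥ -1` and `-K·(d;d_i) = 1`. -/
def ESet {n : ℕ} : Set (ℝ × (Fin (n + 3) → ℝ)) :=
  {d | IntVec d ∧ -1 ≤ dotp d d ∧ dotp negK d = 1}

/-- The set `C` of integer vectors with `(x;x_i)·(x;x_i) ≥ 0` that pair nonnegatively
with every element of `E`. -/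
def CSet {n : ℕ} : Set (ℝ × (Fin (n + 3) → ℝ)) :=
  {x | IntVec x ∧ 0 ≤ dotp x x ∧ ∀ d ∈ ESet, 0 ≤ dotp x d}

/-!
`Cr` is the reflection `v ↦ v + (v·h) h` in the integral vector `h = (1; 1, 1, 1, 0, …, 0)`,
which satisfies `h·h = -2` and `-K·h = 0`. A reflection in such a vector is an involutive
isometry of the product that fixes `-K` and preserves integrality, so it maps `E` onto itself;
being self-adjoint, it then maps `C`, which is cut out by pairing with `E`, into itself.
-/

section Reflection

variable {n : ℕ}

lemma dotp_comm (v w : ℝ × (Fin (n + 3) → ℝ)) : dotp v w = dotp w v := by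
  simp only [dotp, mul_comm]

lemma dotp_add_smul_left (v h w : ℝ × (Fin (n + 3) → ℝ)) (a : ℝ) :
    dotp (v + a • h) w = dotp v w + a * dotp h w := by
  simp only [dotp, Prod.fst_add, Prod.snd_add, Prod.smul_fst, Prod.smul_snd, Pi.add_apply,
    Pi.smul_apply, smul_eq_mul, add_mul, Finset.sum_add_distrib, mul_assoc, ← Finset.mul_sum]
  ring

lemma dotp_add_smul_right (v h w : ℝ × (Fin (n + 3) → ℝ)) (a : ℝ) :
    dotp w (v + a • h) = dotp w v + a * dotp w h := by
  rw [dotp_comm, dotp_add_smul_left, dotp_comm v, dotp_comm h]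

def dotpReflection (h v : ℝ × (Fin (n + 3) → ℝ)) : ℝ × (Fin (n + 3) → ℝ) :=
  v + dotp v h • h

variable {h : ℝ × (Fin (n + 3) → ℝ)}

lemma dotp_dotpReflection (hh : dotp h h = -2) (v w : ℝ × (Fin (n + 3) → ℝ)) :
    dotp (dotpReflection h v) (dotpReflection h w) = dotp v w := by
  simp only [dotpReflection, dotp_add_smul_left, dotp_add_smul_right, hh, dotp_comm w h]
  ring

lemma dotpReflection_dotpReflection (hh : dotp h h = -2) (v : ℝ × (Fin (n + 3) → ℝ)) :
    dotpReflection h (dotpReflection h v) = v := by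
  have hv : dotp (dotpReflection h v) h = -dotp v h := by
    rw [dotpReflection, dotp_add_smul_left, hh]; ring
  rw [dotpReflection, hv, dotpReflection, add_assoc, ← add_smul, add_neg_cancel, zero_smul,
    add_zero]

lemma dotpReflection_of_dotp_eq_zero {v : ℝ × (Fin (n + 3) → ℝ)} (hv : dotp v h = 0) :
    dotpReflection h v = v := by
  rw [dotpReflection, hv, zero_smul, add_zero]

lemma dotp_dotpReflection_left (hh : dotp h h = -2) (v w : ℝ × (Fin (n + 3) → ℝ)) :
    dotp (dotpReflection h v) w = dotp v (dotpReflection h w) := by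
  conv_lhs => rw [← dotpReflection_dotpReflection hh w]
  exact dotp_dotpReflection hh v _

lemma IntVec.dotp {v w : ℝ × (Fin (n + 3) → ℝ)} (hv : IntVec v) (hw : IntVec w) :
    ∃ z : ℤ, dotp v w = z := by
  obtain ⟨⟨a, ha⟩, hvi⟩ := hv
  obtain ⟨⟨b, hb⟩, hwi⟩ := hw
  choose f hf using hvi
  choose g hg using hwi
  exact ⟨a * b - ∑ i, f i * g i, by simp [_root_.dotp, ha, hb, hf, hg]⟩

lemma IntVec.add_smul {v : ℝ × (Fin (n + 3) → ℝ)} (hv : IntVec v) (hh : IntVec h) (a : ℤ) :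
    IntVec (v + (a : ℝ) • h) := by
  obtain ⟨⟨b, hb⟩, hvi⟩ := hv
  obtain ⟨⟨c, hc⟩, hhi⟩ := hh
  refine ⟨⟨b + a * c, by simp [hb, hc]⟩, fun i => ?_⟩
  obtain ⟨p, hp⟩ := hvi i
  obtain ⟨q, hq⟩ := hhi i
  exact ⟨p + a * q, by simp [hp, hq]⟩

lemma IntVec.dotpReflection {v : ℝ × (Fin (n + 3) → ℝ)} (hh : IntVec h) (hv : IntVec v) :
    IntVec (dotpReflection h v) := by
  obtain ⟨z, hz⟩ := hv.dotp hh
  rw [_root_.dotpReflection, hz]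
  exact hv.add_smul hh z

lemma dotpReflection_mem_ESet (hh : dotp h h = -2) (hK : dotp negK h = 0) (hint : IntVec h)
    {d : ℝ × (Fin (n + 3) → ℝ)} (hd : d ∈ ESet) : dotpReflection h d ∈ ESet := by
  obtain ⟨hd_int, hd_self, hd_K⟩ := hd
  refine ⟨hint.dotpReflection hd_int, by rwa [dotp_dotpReflection hh], ?_⟩
  rwa [← dotpReflection_of_dotp_eq_zero hK, dotp_dotpReflection hh]

lemma dotpReflection_mem_CSet (hh : dotp h h = -2) (hK : dotp negK h = 0) (hint : IntVec h)
    {x : ℝ × (Fin (n + 3) → ℝ)} (hx : x ∈ CSet) : dotpReflection h x ∈ CSet := by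
  obtain ⟨hx_int, hx_self, hx_E⟩ := hx
  refine ⟨hint.dotpReflection hx_int, by rwa [dotp_dotpReflection hh], fun d hd => ?_⟩
  rw [dotp_dotpReflection_left hh]
  exact hx_E _ (dotpReflection_mem_ESet hh hK hint hd)

end Reflection

section Cremona

variable {n : ℕ}

def crRoot : ℝ × (Fin (n + 3) → ℝ) := (1, Pi.single 0 1 + Pi.single 1 1 + Pi.single 2 1)

lemma fin_zero_ne_two : (0 : Fin (n + 3)) ≠ 2 := by
  simp [Fin.ext_iff, Nat.mod_eq_of_lt (show 2 < n + 3 by omega)]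

lemma fin_one_ne_two : (1 : Fin (n + 3)) ≠ 2 := by
  simp [Fin.ext_iff, Nat.mod_eq_of_lt (show 2 < n + 3 by omega)]

lemma dotp_crRoot (v : ℝ × (Fin (n + 3) → ℝ)) :
    dotp v crRoot = v.1 - v.2 0 - v.2 1 - v.2 2 := by
  simp only [dotp, crRoot, mul_one, Pi.add_apply, Pi.single_apply, mul_add, mul_ite, mul_zero,
    Finset.sum_add_distrib, Finset.sum_ite_eq', Finset.mem_univ, ↓reduceIte]
  ring

lemma dotp_crRoot_self : dotp (crRoot : ℝ × (Fin (n + 3) → ℝ)) crRoot = -2 := by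
  rw [dotp_crRoot]
  norm_num [crRoot, fin_zero_ne_two, fin_one_ne_two]

lemma dotp_negK_crRoot : dotp (negK : ℝ × (Fin (n + 3) → ℝ)) crRoot = 0 := by
  rw [dotp_crRoot]; norm_num [negK]

lemma intVec_crRoot : IntVec (crRoot : ℝ × (Fin (n + 3) → ℝ)) := by
  refine ⟨⟨1, by simp [crRoot]⟩, fun i =>
    ⟨(Pi.single 0 1 + Pi.single 1 1 + Pi.single 2 1 : Fin (n + 3) → ℤ) i, ?_⟩⟩
  simp [crRoot, Pi.single_apply]

lemma Cr_eq_dotpReflection (d : ℝ × (Fin (n + 3) → ℝ)) : Cr d = dotpReflection crRoot d := by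
  rw [dotpReflection, dotp_crRoot]
  ext i
  · simp only [Cr, crRoot, Prod.fst_add, Prod.smul_fst, smul_eq_mul, mul_one]; ring
  · simp only [Cr, crRoot, Prod.snd_add, Prod.smul_snd, Pi.add_apply, Pi.smul_apply,
      Pi.single_apply, smul_eq_mul]
    split_ifs <;> subst_vars <;> simp_all [fin_zero_ne_two, fin_one_ne_two] <;> ring

end Cremona

theorem cremona_preserves_C {n : ℕ} (x : ℝ × (Fin (n + 3) → ℝ)) (hx : x ∈ CSet) :
    Cr x ∈ CSet := by
  rw [Cr_eq_dotpReflection]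
  exact dotpReflection_mem_CSet dotp_crRoot_self dotp_negK_crRoot intVec_crRoot hx
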